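/- For every pair of binary-block-encoders e : 𝒳^n → {0,1} and f : 𝒴^n → {0,1} applied to a pair of discrete memoryless sources (X^n, Y^n), with dependency spectra (P_i)_{i∈{0,1}^n} and (Q_i)_{i∈{0,1}^n} respectively, and with C_i := ψ^{w_H(i)} where ψ is the maximal correlation of (X,Y), the probability of disagreement of the two encoder outputs satisfies the two-sided bound: 2·√(Σ_i P_i)·√(Σ_i Q_i) − 2·Σ_i C_i·P_i^{1/2}·Q_i^{1/2} ≤ P(e(X^n) ≠ f(Y^n)) ≤ 1 − 2·√(Σ_i P_i)·√(Σ_i Q_i) + 2·Σ_i C_i·P_i^{1/2}·Q_i^{1/2}. -/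

import Mathlib

open Finset

noncomputable section

namespace BBE

variable {𝒳 𝒴 : Type*} [Fintype 𝒳] [Fintype 𝒴] [DecidableEq 𝒳] [DecidableEq 𝒴]

/-- Expectation under the `n`-fold product of the pmf `PX` on `𝒳`. -/
def EX {n : ℕ} (PX : 𝒳 → ℝ) (g : (Fin n → 𝒳) → ℝ) : ℝ :=
  ∑ x : Fin n → 𝒳, (∏ i, PX (x i)) * g x

/-- Joint expectation under the `n`-fold product of the joint pmf `PXY` on `𝒳 × 𝒴`. -/
def EJ {n : ℕ} (PXY : 𝒳 × 𝒴 → ℝ) (g : (Fin n → 𝒳) → (Fin n → 𝒴) → ℝ) : ℝ :=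
  ∑ ω : Fin n → 𝒳 × 𝒴, (∏ i, PXY (ω i)) * g (fun i => (ω i).1) (fun i => (ω i).2)

def margX (PXY : 𝒳 × 𝒴 → ℝ) (x : 𝒳) : ℝ := ∑ y, PXY (x, y)

def margY (PXY : 𝒳 × 𝒴 → ℝ) (y : 𝒴) : ℝ := ∑ x, PXY (x, y)

/-- The centered real-valued version `ẽ` of a Boolean function `e`. -/
def centered {n : ℕ} (PX : 𝒳 → ℝ) (e : (Fin n → 𝒳) → Bool) (x : Fin n → 𝒳) : ℝ :=
  (if e x then (1 : ℝ) else 0) - EX PX (fun x' => if e x' then (1 : ℝ) else 0)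

/-- Conditional expectation `E[g(Xⁿ) | X_S = x_S]` under the product pmf. -/
def condExp {n : ℕ} (PX : 𝒳 → ℝ) (g : (Fin n → 𝒳) → ℝ) (S : Finset (Fin n))
    (x : Fin n → 𝒳) : ℝ :=
  ∑ x' : Fin n → 𝒳,
    (∏ i, if i ∈ S then (if x' i = x i then (1 : ℝ) else 0) else PX (x' i)) * g x'

/-- The component `g_S` of the decomposition, defined recursively by
`g_S = E[g | X_S] - ∑_{T ⊂ S} g_T`. -/
def comp {n : ℕ} (PX : 𝒳 → ℝ) (g : (Fin n → 𝒳) → ℝ) (S : Finset (Fin n))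
    (x : Fin n → 𝒳) : ℝ :=
  condExp PX g S x - ∑ T ∈ (S.powerset.erase S).attach, comp PX g T.1 x
termination_by S.card
decreasing_by
  obtain ⟨T, hT⟩ := T
  simp only [Finset.mem_erase, Finset.mem_powerset] at hT
  exact Finset.card_lt_card (lt_of_le_of_ne (Finset.le_iff_subset.mpr hT.2) hT.1)

/-- Variance under the product pmf. -/
def varX {n : ℕ} (PX : 𝒳 → ℝ) (g : (Fin n → 𝒳) → ℝ) : ℝ :=
  EX PX (fun x => (g x - EX PX g) ^ 2)

/-- The set of correlations `E[h(X)·g(Y)]` over zero-mean unit-variance single-letter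
functions; its supremum is the maximal correlation. -/
def corrSet (PXY : 𝒳 × 𝒴 → ℝ) : Set ℝ :=
  {r | ∃ h : 𝒳 → ℝ, ∃ g : 𝒴 → ℝ,
    (∑ x, margX PXY x * h x) = 0 ∧ (∑ y, margY PXY y * g y) = 0 ∧
    (∑ x, margX PXY x * h x ^ 2) = 1 ∧ (∑ y, margY PXY y * g y ^ 2) = 1 ∧
    r = ∑ p : 𝒳 × 𝒴, PXY p * (h p.1 * g p.2)}



set_option linter.unusedSectionVars false

/-! ### Generic lemmas about `EX`, `condExp`, `comp` over an arbitrary finite alphabet -/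

section Generic

variable {α : Type*} [Fintype α] [DecidableEq α] {n : ℕ}

lemma sum_pi_prod (W : Fin n → α → ℝ) :
    ∑ x : Fin n → α, ∏ i, W i (x i) = ∏ i, ∑ a, W i a := by
  rw [Finset.prod_univ_sum]
  simp [Fintype.piFinset_univ]

lemma mass (w : α → ℝ) (hw : ∑ a, w a = 1) :
    ∑ x : Fin n → α, ∏ i, w (x i) = 1 := by
  rw [sum_pi_prod]; simp [hw]

lemma EX_sub (w : α → ℝ) (f g : (Fin n → α) → ℝ) :
    EX w (fun x => f x - g x) = EX w f - EX w g := by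
  simp [EX, mul_sub, Finset.sum_sub_distrib]

lemma EX_const (w : α → ℝ) (hw : ∑ a, w a = 1) (c : ℝ) :
    EX w (fun _ : Fin n → α => c) = c := by
  simp [EX, ← Finset.sum_mul, mass w hw]

lemma EX_finset_sum {ι : Type*} (w : α → ℝ) (s : Finset ι) (F : ι → (Fin n → α) → ℝ) :
    EX w (fun x => ∑ t ∈ s, F t x) = ∑ t ∈ s, EX w (F t) := by
  simp only [EX, Finset.mul_sum]
  exact Finset.sum_comm

lemma condExp_sub (w : α → ℝ) (f g : (Fin n → α) → ℝ) (S : Finset (Fin n)) (x : Fin n → α) :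
    condExp w (fun x' => f x' - g x') S x = condExp w f S x - condExp w g S x := by
  simp [condExp, mul_sub, Finset.sum_sub_distrib]

lemma condExp_finset_sum {ι : Type*} (w : α → ℝ) (s : Finset ι) (F : ι → (Fin n → α) → ℝ)
    (S : Finset (Fin n)) (x : Fin n → α) :
    condExp w (fun x' => ∑ t ∈ s, F t x') S x = ∑ t ∈ s, condExp w (F t) S x := by
  simp only [condExp, Finset.mul_sum]
  exact Finset.sum_comm

lemma condExp_congr (w : α → ℝ) (f g : (Fin n → α) → ℝ) (h : ∀ x, f x = g x)
    (S : Finset (Fin n)) (x : Fin n → α) :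
    condExp w f S x = condExp w g S x := by
  simp only [condExp, h]

lemma prod_delta (x' x : Fin n → α) :
    (∏ i, if x' i = x i then (1:ℝ) else 0) = if x' = x then 1 else 0 := by
  by_cases h : x' = x
  · simp [h]
  · obtain ⟨i, hi⟩ := Function.ne_iff.mp h
    rw [if_neg h]
    exact Finset.prod_eq_zero (Finset.mem_univ i) (if_neg hi)

lemma condExp_univ (w : α → ℝ) (g : (Fin n → α) → ℝ) (x : Fin n → α) :
    condExp w g Finset.univ x = g x := by
  simp only [condExp, Finset.mem_univ, if_true]
  rw [Finset.sum_eq_single x]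
  · simp
  · intro x' _ hx'
    rw [prod_delta, if_neg hx', zero_mul]
  · simp

end Generic

section Generic2

variable {α : Type*} [Fintype α] [DecidableEq α] {n : ℕ}

/-- A function depends only on the coordinates in `S`. -/
def DependsOn (S : Finset (Fin n)) (f : (Fin n → α) → ℝ) : Prop :=
  ∀ x x' : Fin n → α, (∀ i ∈ S, x i = x' i) → f x = f x'

lemma condExp_condExp (w : α → ℝ) (hw : ∑ a, w a = 1) (g : (Fin n → α) → ℝ)
    (S T : Finset (Fin n)) (x : Fin n → α) :
    condExp w (condExp w g S) T x = condExp w g (S ∩ T) x := by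
  simp only [condExp]
  simp_rw [Finset.mul_sum]
  rw [Finset.sum_comm]
  apply Finset.sum_congr rfl
  intro x'' _
  simp_rw [← mul_assoc]
  rw [← Finset.sum_mul]
  congr 1
  have : ∀ x' : Fin n → α,
      (∏ i, if i ∈ T then (if x' i = x i then (1:ℝ) else 0) else w (x' i)) *
        (∏ i, if i ∈ S then (if x'' i = x' i then (1:ℝ) else 0) else w (x'' i))
      = ∏ i, ((if i ∈ T then (if x' i = x i then (1:ℝ) else 0) else w (x' i)) *
          (if i ∈ S then (if x'' i = x' i then (1:ℝ) else 0) else w (x'' i))) := by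
    intro x'; rw [Finset.prod_mul_distrib]
  simp_rw [this]
  rw [sum_pi_prod (fun i c => (if i ∈ T then (if c = x i then (1:ℝ) else 0) else w c) *
      (if i ∈ S then (if x'' i = c then 1 else 0) else w (x'' i)))]
  apply Finset.prod_congr rfl
  intro i _
  by_cases hS : i ∈ S <;> by_cases hT : i ∈ T <;>
    simp [hS, hT, Finset.mem_inter, mul_ite, ite_mul, ← Finset.sum_mul, hw]

lemma condExp_kernel_mass (w : α → ℝ) (hw : ∑ a, w a = 1) (S : Finset (Fin n))
    (x : Fin n → α) :
    ∑ x' : Fin n → α, (∏ i, if i ∈ S then (if x' i = x i then (1:ℝ) else 0) else w (x' i)) = 1 := by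
  rw [sum_pi_prod (fun i c => if i ∈ S then (if c = x i then (1:ℝ) else 0) else w c)]
  rw [Finset.prod_eq_one]
  intro i _
  by_cases hS : i ∈ S <;> simp [hS, hw]

lemma condExp_of_dependsOn (w : α → ℝ) (hw : ∑ a, w a = 1) (g : (Fin n → α) → ℝ)
    (S : Finset (Fin n)) (hg : DependsOn S g) (x : Fin n → α) :
    condExp w g S x = g x := by
  simp only [condExp]
  have : ∀ x' : Fin n → α,
      (∏ i, if i ∈ S then (if x' i = x i then (1:ℝ) else 0) else w (x' i)) * g x'
      = (∏ i, if i ∈ S then (if x' i = x i then (1:ℝ) else 0) else w (x' i)) * g x := by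
    intro x'
    by_cases h : (∏ i, if i ∈ S then (if x' i = x i then (1:ℝ) else 0) else w (x' i)) = 0
    · rw [h, zero_mul, zero_mul]
    · have hag : ∀ i ∈ S, x' i = x i := by
        intro i hi
        by_contra hne
        exact h (Finset.prod_eq_zero (Finset.mem_univ i) (by simp [hi, hne]))
      rw [hg x' x hag]
  simp_rw [this]
  rw [← Finset.sum_mul, condExp_kernel_mass w hw, one_mul]

lemma pull_symm (w : α → ℝ) (u v : (Fin n → α) → ℝ) (T : Finset (Fin n)) :
    EX w (fun x => v x * condExp w u T x) = EX w (fun x => u x * condExp w v T x) := by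
  simp only [EX, condExp]
  simp_rw [Finset.mul_sum]
  have key : ∀ x x' : Fin n → α,
      (∏ i, w (x i)) * ((∏ i, if i ∈ T then (if x' i = x i then (1:ℝ) else 0) else w (x' i)))
      = (∏ i, w (x' i)) * ((∏ i, if i ∈ T then (if x i = x' i then (1:ℝ) else 0) else w (x i))) := by
    intro x x'
    rw [← Finset.prod_mul_distrib, ← Finset.prod_mul_distrib]
    apply Finset.prod_congr rfl
    intro i _
    by_cases hT : i ∈ T
    · by_cases he : x' i = x i
      · simp [hT, he]
      · have he' : ¬ x i = x' i := fun h => he h.symm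
        simp [hT, he, he']
    · simp [hT, mul_comm]
  calc ∑ x : Fin n → α, ∑ x' : Fin n → α,
        (∏ i, w (x i)) * (v x * ((∏ i, if i ∈ T then (if x' i = x i then (1:ℝ) else 0) else w (x' i)) * u x'))
      = ∑ x' : Fin n → α, ∑ x : Fin n → α,
        (∏ i, w (x' i)) * (u x' * ((∏ i, if i ∈ T then (if x i = x' i then (1:ℝ) else 0) else w (x i)) * v x)) := by
        rw [Finset.sum_comm]
        apply Finset.sum_congr rfl; intro x' _
        apply Finset.sum_congr rfl; intro x _
        linear_combination (v x * u x') * key x x'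
      _ = _ := rfl

end Generic2

section CompLemmas

variable {α : Type*} [Fintype α] [DecidableEq α] {n : ℕ}

lemma EX_congr (w : α → ℝ) (f g : (Fin n → α) → ℝ) (h : ∀ x, f x = g x) :
    EX w f = EX w g := by simp only [EX, h]

lemma comp_eq (w : α → ℝ) (g : (Fin n → α) → ℝ) (S : Finset (Fin n)) (x : Fin n → α) :
    comp w g S x = condExp w g S x - ∑ T ∈ S.powerset.erase S, comp w g T x := by
  rw [comp]
  congr 1
  exact Finset.sum_attach _ (fun T => comp w g T x)

lemma sum_comp (w : α → ℝ) (g : (Fin n → α) → ℝ) (S : Finset (Fin n)) (x : Fin n → α) :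
    ∑ T ∈ S.powerset, comp w g T x = condExp w g S x := by
  have hS : S ∈ S.powerset := Finset.mem_powerset_self S
  rw [← Finset.add_sum_erase _ _ hS, comp_eq]
  ring

lemma decomp (w : α → ℝ) (g : (Fin n → α) → ℝ) (x : Fin n → α) :
    ∑ S : Finset (Fin n), comp w g S x = g x := by
  have := sum_comp w g Finset.univ x
  rw [Finset.powerset_univ] at this
  rw [this, condExp_univ]

lemma condExp_dependsOn (w : α → ℝ) (g : (Fin n → α) → ℝ) (S : Finset (Fin n)) :
    DependsOn S (fun x => condExp w g S x) := by
  intro x x' h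
  simp only [condExp]
  apply Finset.sum_congr rfl
  intro x'' _
  congr 1
  apply Finset.prod_congr rfl
  intro i _
  by_cases hi : i ∈ S
  · simp [hi, h i hi]
  · simp [hi]

lemma comp_dependsOn (w : α → ℝ) (g : (Fin n → α) → ℝ) (S : Finset (Fin n)) :
    DependsOn S (comp w g S) := by
  induction S using Finset.strongInduction with
  | _ S ih =>
    intro x x' h
    rw [comp_eq, comp_eq]
    congr 1
    · exact condExp_dependsOn w g S x x' h
    · apply Finset.sum_congr rfl
      intro T hT
      simp only [Finset.mem_erase, Finset.mem_powerset] at hT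
      have hTS : T ⊂ S := lt_of_le_of_ne hT.2 hT.1
      exact ih T hTS x x' (fun i hi => h i (hTS.1 hi))

lemma condExp_comp (w : α → ℝ) (hw : ∑ a, w a = 1) (g : (Fin n → α) → ℝ)
    (S : Finset (Fin n)) :
    ∀ (A : Finset (Fin n)) (x : Fin n → α),
      condExp w (comp w g S) A x = if S ⊆ A then comp w g S x else 0 := by
  induction S using Finset.strongInduction with
  | _ S ih =>
    intro A x
    rw [condExp_congr w (comp w g S)
      (fun x' => condExp w g S x' - ∑ T ∈ S.powerset.erase S, comp w g T x')
      (fun x' => comp_eq w g S x') A x]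
    rw [condExp_sub, condExp_finset_sum, condExp_condExp w hw]
    have hT' : ∀ T ∈ S.powerset.erase S,
        condExp w (comp w g T) A x = if T ⊆ A then comp w g T x else 0 := by
      intro T hT
      simp only [Finset.mem_erase, Finset.mem_powerset] at hT
      exact ih T (lt_of_le_of_ne hT.2 hT.1) A x
    rw [Finset.sum_congr rfl hT']
    by_cases hSA : S ⊆ A
    · rw [if_pos hSA, Finset.inter_eq_left.mpr hSA]
      have h2 : ∀ T ∈ S.powerset.erase S,
          (if T ⊆ A then comp w g T x else 0) = comp w g T x := by
        intro T hT
        simp only [Finset.mem_erase, Finset.mem_powerset] at hT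
        exact if_pos (hT.2.trans hSA)
      rw [Finset.sum_congr rfl h2, comp_eq]
    · rw [if_neg hSA, ← sum_comp w g (S ∩ A) x, sub_eq_zero]
      rw [← Finset.sum_filter]
      apply Finset.sum_congr _ (fun _ _ => rfl)
      ext T
      simp only [Finset.mem_powerset, Finset.mem_filter, Finset.mem_erase,
        Finset.subset_inter_iff]
      constructor
      · rintro ⟨hTS, hTA⟩
        refine ⟨⟨?_, hTS⟩, hTA⟩
        rintro rfl
        exact hSA hTA
      · rintro ⟨⟨_, hTS⟩, hTA⟩
        exact ⟨hTS, hTA⟩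

lemma pullout (w : α → ℝ) (hw : ∑ a, w a = 1) (u v : (Fin n → α) → ℝ)
    (T : Finset (Fin n)) (hv : DependsOn T v) :
    EX w (fun x => v x * u x) = EX w (fun x => v x * condExp w u T x) := by
  rw [pull_symm]
  apply EX_congr
  intro x
  rw [condExp_of_dependsOn w hw v T hv x, mul_comm]

lemma EX_comp_mul_comp (w : α → ℝ) (hw : ∑ a, w a = 1)
    (g g' : (Fin n → α) → ℝ) (S T : Finset (Fin n)) (hST : S ≠ T) :
    EX w (fun x => comp w g S x * comp w g' T x) = 0 := by
  by_cases hS : S ⊆ T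
  · have hT : ¬ T ⊆ S := fun h => hST (Finset.Subset.antisymm hS h)
    rw [pullout w hw (comp w g' T) (comp w g S) S (comp_dependsOn w g S)]
    rw [EX_congr w _ (fun _ => 0)]
    · simp [EX]
    · intro x
      rw [condExp_comp w hw g' T S x, if_neg hT, mul_zero]
  · rw [EX_congr w _ (fun x => comp w g' T x * comp w g S x) (fun x => mul_comm _ _)]
    rw [pullout w hw (comp w g S) (comp w g' T) T (comp_dependsOn w g' T)]
    rw [EX_congr w _ (fun _ => 0)]
    · simp [EX]
    · intro x
      rw [condExp_comp w hw g S T x, if_neg hS, mul_zero]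

end CompLemmas

section Surgery

variable {α : Type*} [Fintype α] [DecidableEq α] {n : ℕ}

lemma fiber_bij (k : Fin n) (a b : α) (H : (Fin n → α) → ℝ) :
    ∑ x ∈ Finset.univ.filter (fun x : Fin n → α => x k = b), H (Function.update x k a)
    = ∑ x ∈ Finset.univ.filter (fun x : Fin n → α => x k = a), H x := by
  apply Finset.sum_nbij' (i := fun x => Function.update x k a)
    (j := fun y => Function.update y k b)
  · intro x _
    simp [Function.update_self]
  · intro y _
    simp [Function.update_self]
  · intro x hx
    simp only [Finset.mem_filter, Finset.mem_univ, true_and] at hx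
    rw [Function.update_idem, ← hx, Function.update_eq_self]
  · intro y hy
    simp only [Finset.mem_filter, Finset.mem_univ, true_and] at hy
    rw [Function.update_idem, ← hy, Function.update_eq_self]
  · intro x _
    rfl

lemma sum_weight_update (w : α → ℝ) (hw : ∑ a, w a = 1) (k : Fin n)
    (H : (Fin n → α) → ℝ) (a : α) :
    ∑ x : Fin n → α, w (x k) * H (Function.update x k a)
    = ∑ x : Fin n → α, (if x k = a then 1 else 0) * H x := by
  have step1 : ∀ x : Fin n → α, w (x k) * H (Function.update x k a)
      = ∑ b, (if x k = b then 1 else 0) * (w b * H (Function.update x k a)) := by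
    intro x
    rw [Finset.sum_eq_single (x k)]
    · simp
    · intro b _ hb
      rw [if_neg (fun h => hb h.symm), zero_mul]
    · simp
  simp_rw [step1]
  rw [Finset.sum_comm]
  have step2 : ∀ b, ∑ x : Fin n → α, (if x k = b then (1:ℝ) else 0) * (w b * H (Function.update x k a))
      = w b * ∑ x ∈ Finset.univ.filter (fun x : Fin n → α => x k = a), H x := by
    intro b
    rw [← fiber_bij k a b H, Finset.sum_filter, Finset.mul_sum]
    apply Finset.sum_congr rfl
    intro x _
    by_cases h : x k = b <;> simp [h]
  simp_rw [step2]
  rw [← Finset.sum_mul, hw, one_mul, Finset.sum_filter]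
  apply Finset.sum_congr rfl
  intro x _
  by_cases h : x k = a <;> simp [h]

lemma fubini_k (w : α → ℝ) (hw : ∑ a, w a = 1) (k : Fin n) (F : (Fin n → α) → ℝ) :
    ∑ x : Fin n → α, (∏ i, w (x i)) * F x
    = ∑ x : Fin n → α, (∏ i, w (x i)) * ∑ a, w a * F (Function.update x k a) := by
  have hprod : ∀ (x : Fin n → α) (a : α),
      (∏ i, w (x i)) = w (x k) * ∏ i ∈ Finset.univ.erase k, w ((Function.update x k a) i) := by
    intro x a
    rw [← Finset.mul_prod_erase Finset.univ (fun i => w (x i)) (Finset.mem_univ k)]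
    congr 1
    apply Finset.prod_congr rfl
    intro i hi
    rw [Function.update_of_ne (Finset.ne_of_mem_erase hi)]
  set G : (Fin n → α) → ℝ := fun y => (∏ i ∈ Finset.univ.erase k, w (y i)) * F y with hG
  calc ∑ x : Fin n → α, (∏ i, w (x i)) * F x
      = ∑ x : Fin n → α, w (x k) * G x := by
        apply Finset.sum_congr rfl
        intro x _
        rw [hG, ← Finset.mul_prod_erase Finset.univ (fun i => w (x i)) (Finset.mem_univ k)]
        ring
    _ = ∑ x : Fin n → α, (∑ a, w a * (if x k = a then 1 else 0)) * G x := by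
        apply Finset.sum_congr rfl
        intro x _
        congr 1
        rw [Finset.sum_eq_single (x k)]
        · simp
        · intro b _ hb
          rw [if_neg (fun h => hb h.symm), mul_zero]
        · simp
    _ = ∑ a, w a * ∑ x : Fin n → α, (if x k = a then 1 else 0) * G x := by
        simp_rw [Finset.sum_mul, Finset.mul_sum]
        rw [Finset.sum_comm]
        simp_rw [mul_assoc]
    _ = ∑ a, w a * ∑ x : Fin n → α, w (x k) * G (Function.update x k a) := by
        simp_rw [sum_weight_update w hw k G]
    _ = ∑ x : Fin n → α, (∏ i, w (x i)) * ∑ a, w a * F (Function.update x k a) := by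
        simp_rw [Finset.mul_sum]
        rw [Finset.sum_comm]
        apply Finset.sum_congr rfl
        intro x _
        apply Finset.sum_congr rfl
        intro a _
        simp only [hG]
        rw [hprod x a]
        ring
  
lemma condExp_erase (w : α → ℝ) (v : (Fin n → α) → ℝ) (k : Fin n) (y : Fin n → α) :
    condExp w v (Finset.univ.erase k) y = ∑ b, w b * v (Function.update y k b) := by
  have key : ∀ y' : Fin n → α,
      (∏ i, if i ∈ Finset.univ.erase k then (if y' i = y i then (1:ℝ) else 0) else w (y' i)) * v y'
      = if y' = Function.update y k (y' k) then w (y' k) * v y' else 0 := by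
    intro y'
    rw [← Finset.mul_prod_erase Finset.univ _ (Finset.mem_univ k)]
    have hk : (if k ∈ Finset.univ.erase k then (if y' k = y k then (1:ℝ) else 0) else w (y' k))
        = w (y' k) := by simp
    rw [hk]
    by_cases h : y' = Function.update y k (y' k)
    · rw [if_pos h]
      have : ∏ i ∈ Finset.univ.erase k,
          (if i ∈ Finset.univ.erase k then (if y' i = y i then (1:ℝ) else 0) else w (y' i)) = 1 := by
        apply Finset.prod_eq_one
        intro i hi
        have hik : i ≠ k := Finset.ne_of_mem_erase hi
        have : y' i = y i := by
          conv_lhs => rw [h]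
          exact Function.update_of_ne hik _ _
        simp [hi, this]
      rw [this]
      ring
    · rw [if_neg h]
      have : ∃ i, i ≠ k ∧ y' i ≠ y i := by
        by_contra hc
        push_neg at hc
        apply h
        funext i
        by_cases hik : i = k
        · subst hik; rw [Function.update_self]
        · rw [Function.update_of_ne hik, hc i hik]
      obtain ⟨i, hik, hiv⟩ := this
      have hmem : i ∈ Finset.univ.erase k := Finset.mem_erase.mpr ⟨hik, Finset.mem_univ i⟩
      rw [Finset.prod_eq_zero hmem (by rw [if_pos hmem, if_neg hiv])]
      ring
  have key2 : ∀ y' : Fin n → α,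
      (∑ b, if y' = Function.update y k b then w b * v y' else 0)
      = if y' = Function.update y k (y' k) then w (y' k) * v y' else 0 := by
    intro y'
    rw [Finset.sum_eq_single (y' k)]
    · intro b _ hb
      rw [if_neg]
      intro hcon
      exact hb (by rw [hcon, Function.update_self])
    · simp
  calc condExp w v (Finset.univ.erase k) y
      = ∑ y' : Fin n → α, if y' = Function.update y k (y' k) then w (y' k) * v y' else 0 := by
        simp only [condExp]
        exact Finset.sum_congr rfl (fun y' _ => key y')
    _ = ∑ y' : Fin n → α, ∑ b, if y' = Function.update y k b then w b * v y' else 0 := by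
        exact Finset.sum_congr rfl (fun y' _ => (key2 y').symm)
    _ = ∑ b, ∑ y' : Fin n → α, if y' = Function.update y k b then w b * v y' else 0 :=
        Finset.sum_comm
    _ = ∑ b, w b * v (Function.update y k b) := by
        apply Finset.sum_congr rfl
        intro b _
        rw [Finset.sum_ite_eq' Finset.univ (Function.update y k b)
          (fun y' => w b * v y')]
        simp

end Surgery

section Joint

variable {𝒳 𝒴 : Type*} [Fintype 𝒳] [Fintype 𝒴] [DecidableEq 𝒳] [DecidableEq 𝒴] {n : ℕ}
variable (PXY : 𝒳 × 𝒴 → ℝ)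

lemma sum_pair_split (f : (Fin n → 𝒳 × 𝒴) → ℝ) :
    ∑ ω : Fin n → 𝒳 × 𝒴, f ω = ∑ x : Fin n → 𝒳, ∑ y : Fin n → 𝒴, f (fun i => (x i, y i)) := by
  rw [← Equiv.sum_comp (Equiv.arrowProdEquivProdArrow (Fin n) (fun _ => 𝒳) (fun _ => 𝒴)).symm f, Fintype.sum_prod_type]
  rfl

lemma pair_kernel_X (x' : Fin n → 𝒳) (A : Finset (Fin n)) (ω : Fin n → 𝒳 × 𝒴) :
    ∑ y' : Fin n → 𝒴, ∏ i, (if i ∈ A then (if (x' i, y' i) = ω i then (1:ℝ) else 0)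
        else PXY (x' i, y' i))
    = ∏ i, (if i ∈ A then (if x' i = (ω i).1 then (1:ℝ) else 0) else margX PXY (x' i)) := by
  rw [sum_pi_prod (fun i b => if i ∈ A then (if (x' i, b) = ω i then (1:ℝ) else 0)
      else PXY (x' i, b))]
  apply Finset.prod_congr rfl
  intro i _
  by_cases hA : i ∈ A
  · simp only [hA, if_true]
    by_cases hx : x' i = (ω i).1
    · rw [if_pos hx]
      rw [Finset.sum_eq_single (ω i).2]
      · rw [if_pos (by rw [hx])]
      · intro b _ hb
        rw [if_neg (by intro h; exact hb (congrArg Prod.snd h))]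
      · simp
    · rw [if_neg hx]
      apply Finset.sum_eq_zero
      intro b _
      rw [if_neg (by intro h; exact hx (congrArg Prod.fst h))]
  · simp [hA, margX]

lemma condExp_liftX (u : (Fin n → 𝒳) → ℝ) (A : Finset (Fin n)) (ω : Fin n → 𝒳 × 𝒴) :
    condExp PXY (fun ω' => u (fun i => (ω' i).1)) A ω
      = condExp (margX PXY) u A (fun i => (ω i).1) := by
  simp only [condExp]
  rw [sum_pair_split]
  simp only []
  apply Finset.sum_congr rfl
  intro x' _
  rw [← Finset.sum_mul, pair_kernel_X]

lemma pair_kernel_Y (y' : Fin n → 𝒴) (A : Finset (Fin n)) (ω : Fin n → 𝒳 × 𝒴) :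
    ∑ x' : Fin n → 𝒳, ∏ i, (if i ∈ A then (if (x' i, y' i) = ω i then (1:ℝ) else 0)
        else PXY (x' i, y' i))
    = ∏ i, (if i ∈ A then (if y' i = (ω i).2 then (1:ℝ) else 0) else margY PXY (y' i)) := by
  rw [sum_pi_prod (fun i a => if i ∈ A then (if (a, y' i) = ω i then (1:ℝ) else 0)
      else PXY (a, y' i))]
  apply Finset.prod_congr rfl
  intro i _
  by_cases hA : i ∈ A
  · simp only [hA, if_true]
    by_cases hy : y' i = (ω i).2
    · rw [if_pos hy]
      rw [Finset.sum_eq_single (ω i).1]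
      · rw [if_pos (by rw [hy])]
      · intro a _ ha
        rw [if_neg (by intro h; exact ha (congrArg Prod.fst h))]
      · simp
    · rw [if_neg hy]
      apply Finset.sum_eq_zero
      intro a _
      rw [if_neg (by intro h; exact hy (congrArg Prod.snd h))]
  · simp [hA, margY]

lemma condExp_liftY (v : (Fin n → 𝒴) → ℝ) (A : Finset (Fin n)) (ω : Fin n → 𝒳 × 𝒴) :
    condExp PXY (fun ω' => v (fun i => (ω' i).2)) A ω
      = condExp (margY PXY) v A (fun i => (ω i).2) := by
  simp only [condExp]
  rw [sum_pair_split]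
  simp only []
  rw [Finset.sum_comm]
  apply Finset.sum_congr rfl
  intro y' _
  rw [← Finset.sum_mul, pair_kernel_Y]

lemma EX_liftX (u : (Fin n → 𝒳) → ℝ) :
    EX PXY (fun ω => u (fun i => (ω i).1)) = EX (margX PXY) u := by
  simp only [EX]
  rw [sum_pair_split]
  simp only []
  apply Finset.sum_congr rfl
  intro x' _
  rw [← Finset.sum_mul]
  congr 1
  rw [sum_pi_prod (fun i b => PXY (x' i, b))]
  rfl

lemma EX_liftY (v : (Fin n → 𝒴) → ℝ) :
    EX PXY (fun ω => v (fun i => (ω i).2)) = EX (margY PXY) v := by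
  simp only [EX]
  rw [sum_pair_split]
  simp only []
  rw [Finset.sum_comm]
  apply Finset.sum_congr rfl
  intro y' _
  rw [← Finset.sum_mul]
  congr 1
  rw [sum_pi_prod (fun i a => PXY (a, y' i))]
  rfl

/-- Cross terms of the decomposition vanish. -/
lemma cross_term_zero (hsum : ∑ p : 𝒳 × 𝒴, PXY p = 1)
    (hwX : ∑ x, margX PXY x = 1) (hwY : ∑ y, margY PXY y = 1)
    (g : (Fin n → 𝒳) → ℝ) (g' : (Fin n → 𝒴) → ℝ) (S T : Finset (Fin n)) (hST : S ≠ T) :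
    EX PXY (fun ω => comp (margX PXY) g S (fun i => (ω i).1)
      * comp (margY PXY) g' T (fun i => (ω i).2)) = 0 := by
  by_cases hS : S ⊆ T
  · have hT : ¬ T ⊆ S := fun h => hST (Finset.Subset.antisymm hS h)
    have hdep : DependsOn S (fun ω : Fin n → 𝒳 × 𝒴 => comp (margX PXY) g S (fun i => (ω i).1)) := by
      intro ω ω' h
      exact comp_dependsOn (margX PXY) g S _ _ (fun i hi => by rw [h i hi])
    rw [pullout PXY hsum (fun ω => comp (margY PXY) g' T (fun i => (ω i).2)) _ S hdep]
    rw [EX_congr PXY _ (fun _ => 0)]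
    · simp [EX]
    · intro ω
      rw [condExp_liftY PXY (comp (margY PXY) g' T) S ω,
        condExp_comp (margY PXY) hwY g' T S _, if_neg hT, mul_zero]
  · have hdep : DependsOn T (fun ω : Fin n → 𝒳 × 𝒴 => comp (margY PXY) g' T (fun i => (ω i).2)) := by
      intro ω ω' h
      exact comp_dependsOn (margY PXY) g' T _ _ (fun i hi => by rw [h i hi])
    rw [EX_congr PXY _ (fun ω => comp (margY PXY) g' T (fun i => (ω i).2)
        * comp (margX PXY) g S (fun i => (ω i).1)) (fun ω => mul_comm _ _)]
    rw [pullout PXY hsum (fun ω => comp (margX PXY) g S (fun i => (ω i).1)) _ T hdep]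
    rw [EX_congr PXY _ (fun _ => 0)]
    · simp [EX]
    · intro ω
      rw [condExp_liftX PXY (comp (margX PXY) g S) T ω,
        condExp_comp (margX PXY) hwX g S T _, if_neg hS, mul_zero]

end Joint

section SingleLetter

variable {𝒳 𝒴 : Type*} [Fintype 𝒳] [Fintype 𝒴] [DecidableEq 𝒳] [DecidableEq 𝒴]
variable (PXY : 𝒳 × 𝒴 → ℝ)

lemma margX_nonneg (hnn : ∀ p, 0 ≤ PXY p) (x : 𝒳) : 0 ≤ margX PXY x :=
  Finset.sum_nonneg (fun y _ => hnn (x, y))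

lemma margY_nonneg (hnn : ∀ p, 0 ≤ PXY p) (y : 𝒴) : 0 ≤ margY PXY y :=
  Finset.sum_nonneg (fun x _ => hnn (x, y))

lemma PXY_le_margX (hnn : ∀ p, 0 ≤ PXY p) (x : 𝒳) (y : 𝒴) : PXY (x, y) ≤ margX PXY x :=
  Finset.single_le_sum (fun y' _ => hnn (x, y')) (Finset.mem_univ y)

lemma PXY_le_margY (hnn : ∀ p, 0 ≤ PXY p) (x : 𝒳) (y : 𝒴) : PXY (x, y) ≤ margY PXY y :=
  Finset.single_le_sum (fun x' _ => hnn (x', y)) (Finset.mem_univ x)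

lemma PXY_zero_of_margX (hnn : ∀ p, 0 ≤ PXY p) {x : 𝒳} (hx : margX PXY x = 0) (y : 𝒴) :
    PXY (x, y) = 0 :=
  le_antisymm (hx ▸ PXY_le_margX PXY hnn x y) (hnn (x, y))

lemma margX_sum (hsum : ∑ p : 𝒳 × 𝒴, PXY p = 1) : ∑ x, margX PXY x = 1 := by
  rw [← hsum, Fintype.sum_prod_type]
  rfl

lemma margY_sum (hsum : ∑ p : 𝒳 × 𝒴, PXY p = 1) : ∑ y, margY PXY y = 1 := by
  have h2 : ∑ p : 𝒳 × 𝒴, PXY p = ∑ y, ∑ x, PXY (x, y) := by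
    rw [Fintype.sum_prod_type]
    exact Finset.sum_comm
  rw [← hsum, h2]
  rfl

/-- Construction of a zero-mean unit-variance function from two points of positive mass. -/
lemma exists_unit (μ : 𝒳 → ℝ) (hnn : ∀ x, 0 ≤ μ x) (hsum : ∑ x, μ x = 1)
    (h2 : ∃ x₁ x₂ : 𝒳, x₁ ≠ x₂ ∧ 0 < μ x₁ ∧ 0 < μ x₂) :
    ∃ h : 𝒳 → ℝ, (∑ x, μ x * h x) = 0 ∧ (∑ x, μ x * h x ^ 2) = 1 := by
  obtain ⟨x₁, x₂, hne, hp1, hp2⟩ := h2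
  set p : ℝ := μ x₁ with hp
  have hple : p + μ x₂ ≤ 1 := by
    rw [← hsum]
    rw [show p + μ x₂ = ∑ x ∈ ({x₁, x₂} : Finset 𝒳), μ x by
      rw [Finset.sum_pair hne]]
    exact Finset.sum_le_sum_of_subset_of_nonneg (Finset.subset_univ _)
      (fun x _ _ => hnn x)
  have hplt : p < 1 := lt_of_lt_of_le (by linarith) hple
  have hV : (0:ℝ) < p * (1 - p) := mul_pos hp1 (by linarith)
  set V : ℝ := p * (1 - p) with hVdef
  set s : ℝ := Real.sqrt V with hs
  have hs0 : 0 < s := Real.sqrt_pos.mpr hV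
  have hs2 : s ^ 2 = V := Real.sq_sqrt hV.le
  refine ⟨fun x => ((if x = x₁ then 1 else 0) - p) / s, ?_, ?_⟩
  · have : ∑ x, μ x * (((if x = x₁ then (1:ℝ) else 0) - p) / s)
        = (∑ x, μ x * ((if x = x₁ then (1:ℝ) else 0) - p)) / s := by
      rw [Finset.sum_div]
      apply Finset.sum_congr rfl
      intro x _
      ring
    rw [this]
    have : ∑ x, μ x * ((if x = x₁ then (1:ℝ) else 0) - p)
        = (∑ x, μ x * (if x = x₁ then (1:ℝ) else 0)) - p := by
      simp_rw [show ∀ x : 𝒳, μ x * ((if x = x₁ then (1:ℝ) else 0) - p)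
          = μ x * (if x = x₁ then (1:ℝ) else 0) - μ x * p from fun x => by ring]
      rw [Finset.sum_sub_distrib, ← Finset.sum_mul, hsum, one_mul]
    rw [this]
    have : ∑ x, μ x * (if x = x₁ then (1:ℝ) else 0) = p := by
      rw [Finset.sum_eq_single x₁] <;> simp_all
    rw [this]
    simp
  · have expand : ∀ x : 𝒳, μ x * (((if x = x₁ then (1:ℝ) else 0) - p) / s) ^ 2
        = (μ x * (if x = x₁ then (1:ℝ) else 0) - 2 * p * (μ x * (if x = x₁ then (1:ℝ) else 0))
            + p ^ 2 * μ x) / V := by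
      intro x
      rw [div_pow, hs2]
      by_cases h : x = x₁ <;> simp [h] <;> ring
    simp_rw [expand]
    rw [← Finset.sum_div]
    rw [Finset.sum_add_distrib, Finset.sum_sub_distrib]
    have h1 : ∑ x, μ x * (if x = x₁ then (1:ℝ) else 0) = p := by
      rw [Finset.sum_eq_single x₁] <;> simp_all
    rw [← Finset.mul_sum, ← Finset.mul_sum, h1, hsum]
    rw [hVdef]
    have h1p : (1 - p) ≠ 0 := by linarith
    field_simp
    ring

lemma corrSet_neg {r : ℝ} (hr : r ∈ corrSet PXY) : -r ∈ corrSet PXY := by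
  obtain ⟨h, g, hm, gm, hv, gv, hrr⟩ := hr
  refine ⟨fun x => -h x, g, ?_, gm, ?_, gv, ?_⟩
  · simp only [mul_neg]
    rw [Finset.sum_neg_distrib, hm, neg_zero]
  · have heq : ∀ x : 𝒳, margX PXY x * (-h x) ^ 2 = margX PXY x * h x ^ 2 := fun x => by ring
    simp_rw [heq]
    exact hv
  · rw [hrr, ← Finset.sum_neg_distrib]
    exact Finset.sum_congr rfl (fun p _ => by ring)

lemma psi_nonneg (hnn : ∀ p, 0 ≤ PXY p) (hsum : ∑ p : 𝒳 × 𝒴, PXY p = 1)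
    (hX2 : ∃ x₁ x₂ : 𝒳, x₁ ≠ x₂ ∧ 0 < margX PXY x₁ ∧ 0 < margX PXY x₂)
    (hY2 : ∃ y₁ y₂ : 𝒴, y₁ ≠ y₂ ∧ 0 < margY PXY y₁ ∧ 0 < margY PXY y₂)
    {ψ : ℝ} (hψ : IsLUB (corrSet PXY) ψ) : 0 ≤ ψ := by
  obtain ⟨h, hm, hv⟩ := exists_unit (margX PXY) (margX_nonneg PXY hnn) (margX_sum PXY hsum) hX2
  obtain ⟨g, gm, gv⟩ := exists_unit (margY PXY) (margY_nonneg PXY hnn) (margY_sum PXY hsum) hY2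
  set r : ℝ := ∑ p : 𝒳 × 𝒴, PXY p * (h p.1 * g p.2) with hr
  have h1 : r ∈ corrSet PXY := ⟨h, g, hm, gm, hv, gv, rfl⟩
  have h2 : -r ∈ corrSet PXY := corrSet_neg PXY h1
  have := hψ.1 h1
  have := hψ.1 h2
  linarith

lemma bilinear_bound (hnn : ∀ p, 0 ≤ PXY p)
    {ψ : ℝ} (hψ : IsLUB (corrSet PXY) ψ) (hψ0 : 0 ≤ ψ)
    (h : 𝒳 → ℝ) (g : 𝒴 → ℝ)
    (hm : ∑ x, margX PXY x * h x = 0) (gm : ∑ y, margY PXY y * g y = 0) :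
    |∑ p : 𝒳 × 𝒴, PXY p * (h p.1 * g p.2)|
      ≤ ψ * Real.sqrt (∑ x, margX PXY x * h x ^ 2) * Real.sqrt (∑ y, margY PXY y * g y ^ 2) := by
  set Vh := ∑ x, margX PXY x * h x ^ 2 with hVh
  set Vg := ∑ y, margY PXY y * g y ^ 2 with hVg
  have hVh0 : 0 ≤ Vh := Finset.sum_nonneg (fun x _ => mul_nonneg (margX_nonneg PXY hnn x) (sq_nonneg _))
  have hVg0 : 0 ≤ Vg := Finset.sum_nonneg (fun y _ => mul_nonneg (margY_nonneg PXY hnn y) (sq_nonneg _))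
  by_cases hzh : Vh = 0
  · have hterm : ∀ x : 𝒳, margX PXY x * h x ^ 2 = 0 := by
      intro x
      have := (Finset.sum_eq_zero_iff_of_nonneg
        (fun x _ => mul_nonneg (margX_nonneg PXY hnn x) (sq_nonneg _))).mp hzh
      exact this x (Finset.mem_univ x)
    have : ∀ p : 𝒳 × 𝒴, PXY p * (h p.1 * g p.2) = 0 := by
      intro p
      by_cases hx : margX PXY p.1 = 0
      · rw [show p = (p.1, p.2) from rfl, PXY_zero_of_margX PXY hnn hx p.2, zero_mul]
      · have : h p.1 ^ 2 = 0 := by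
          have := hterm p.1
          rcases mul_eq_zero.mp this with h' | h'
          · exact absurd h' hx
          · exact h'
        rw [pow_eq_zero_iff (by norm_num : 2 ≠ 0)] at this
        rw [this]
        ring
    rw [Finset.sum_eq_zero (fun p _ => this p), hzh, Real.sqrt_zero]
    simp
  · by_cases hzg : Vg = 0
    · have hterm : ∀ y : 𝒴, margY PXY y * g y ^ 2 = 0 := by
        intro y
        have := (Finset.sum_eq_zero_iff_of_nonneg
          (fun y _ => mul_nonneg (margY_nonneg PXY hnn y) (sq_nonneg _))).mp hzg
        exact this y (Finset.mem_univ y)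
      have : ∀ p : 𝒳 × 𝒴, PXY p * (h p.1 * g p.2) = 0 := by
        intro p
        by_cases hy : margY PXY p.2 = 0
        · have : PXY (p.1, p.2) = 0 :=
            le_antisymm (hy ▸ PXY_le_margY PXY hnn p.1 p.2) (hnn (p.1, p.2))
          rw [show p = (p.1, p.2) from rfl, this, zero_mul]
        · have : g p.2 ^ 2 = 0 := by
            have := hterm p.2
            rcases mul_eq_zero.mp this with h' | h'
            · exact absurd h' hy
            · exact h'
          rw [pow_eq_zero_iff (by norm_num : 2 ≠ 0)] at this
          rw [this]
          ring
      rw [Finset.sum_eq_zero (fun p _ => this p), hzg, Real.sqrt_zero]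
      simp
    · have hVhp : 0 < Vh := lt_of_le_of_ne hVh0 (Ne.symm hzh)
      have hVgp : 0 < Vg := lt_of_le_of_ne hVg0 (Ne.symm hzg)
      set sh := Real.sqrt Vh with hsh
      set sg := Real.sqrt Vg with hsg
      have hsh0 : 0 < sh := Real.sqrt_pos.mpr hVhp
      have hsg0 : 0 < sg := Real.sqrt_pos.mpr hVgp
      have hsh2 : sh ^ 2 = Vh := Real.sq_sqrt hVhp.le
      have hsg2 : sg ^ 2 = Vg := Real.sq_sqrt hVgp.le
      set r : ℝ := ∑ p : 𝒳 × 𝒴, PXY p * ((h p.1 / sh) * (g p.2 / sg)) with hr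
      have hmem : r ∈ corrSet PXY := by
        refine ⟨fun x => h x / sh, fun y => g y / sg, ?_, ?_, ?_, ?_, rfl⟩
        · simp only []
          simp_rw [show ∀ x : 𝒳, margX PXY x * (h x / sh) = (margX PXY x * h x) / sh
            from fun x => by ring]
          rw [← Finset.sum_div, hm, zero_div]
        · simp only []
          simp_rw [show ∀ y : 𝒴, margY PXY y * (g y / sg) = (margY PXY y * g y) / sg
            from fun y => by ring]
          rw [← Finset.sum_div, gm, zero_div]
        · simp only []
          simp_rw [show ∀ x : 𝒳, margX PXY x * (h x / sh) ^ 2 = (margX PXY x * h x ^ 2) / sh ^ 2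
            from fun x => by ring]
          rw [← Finset.sum_div, ← hVh, hsh2, div_self hzh]
        · simp only []
          simp_rw [show ∀ y : 𝒴, margY PXY y * (g y / sg) ^ 2 = (margY PXY y * g y ^ 2) / sg ^ 2
            from fun y => by ring]
          rw [← Finset.sum_div, ← hVg, hsg2, div_self hzg]
      have hmem' : -r ∈ corrSet PXY := corrSet_neg PXY hmem
      have hub1 : r ≤ ψ := hψ.1 hmem
      have hub2 : -r ≤ ψ := hψ.1 hmem'
      have habs : |r| ≤ ψ := abs_le.mpr ⟨by linarith, hub1⟩
      have hfact : ∑ p : 𝒳 × 𝒴, PXY p * (h p.1 * g p.2) = r * (sh * sg) := by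
        rw [hr, Finset.sum_mul]
        apply Finset.sum_congr rfl
        intro p _
        field_simp
      rw [hfact, abs_mul, abs_of_nonneg (mul_nonneg hsh0.le hsg0.le)]
      calc |r| * (sh * sg) ≤ ψ * (sh * sg) :=
            mul_le_mul_of_nonneg_right habs (mul_nonneg hsh0.le hsg0.le)
        _ = ψ * sh * sg := by ring

/-- The single-letter conditional-expectation operator. -/
def condOpX (g : 𝒴 → ℝ) (a : 𝒳) : ℝ :=
  if margX PXY a = 0 then 0 else (∑ b, PXY (a, b) * g b) / margX PXY a

lemma condOpX_key (hnn : ∀ p, 0 ≤ PXY p) (g : 𝒴 → ℝ) (a : 𝒳) :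
    margX PXY a * condOpX PXY g a = ∑ b, PXY (a, b) * g b := by
  unfold condOpX
  by_cases h : margX PXY a = 0
  · rw [if_pos h, h, zero_mul]
    symm
    apply Finset.sum_eq_zero
    intro b _
    rw [PXY_zero_of_margX PXY hnn h b, zero_mul]
  · rw [if_neg h]
    field_simp

lemma condOpX_mean (hnn : ∀ p, 0 ≤ PXY p) (g : 𝒴 → ℝ) :
    ∑ a, margX PXY a * condOpX PXY g a = ∑ b, margY PXY b * g b := by
  simp_rw [condOpX_key PXY hnn g]
  rw [Finset.sum_comm]
  apply Finset.sum_congr rfl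
  intro b _
  rw [margY, Finset.sum_mul]

lemma condOpX_norm (hnn : ∀ p, 0 ≤ PXY p)
    {ψ : ℝ} (hψ : IsLUB (corrSet PXY) ψ) (hψ0 : 0 ≤ ψ)
    (g : 𝒴 → ℝ) (gm : ∑ b, margY PXY b * g b = 0) :
    ∑ a, margX PXY a * condOpX PXY g a ^ 2 ≤ ψ ^ 2 * ∑ b, margY PXY b * g b ^ 2 := by
  set Vh := ∑ a, margX PXY a * condOpX PXY g a ^ 2 with hVh
  set Vg := ∑ b, margY PXY b * g b ^ 2 with hVg
  have hVh0 : 0 ≤ Vh := Finset.sum_nonneg (fun a _ => mul_nonneg (margX_nonneg PXY hnn a) (sq_nonneg _))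
  have hVg0 : 0 ≤ Vg := Finset.sum_nonneg (fun b _ => mul_nonneg (margY_nonneg PXY hnn b) (sq_nonneg _))
  have hm : ∑ a, margX PXY a * condOpX PXY g a = 0 := by
    rw [condOpX_mean PXY hnn g, gm]
  have hident : Vh = ∑ p : 𝒳 × 𝒴, PXY p * (condOpX PXY g p.1 * g p.2) := by
    rw [hVh, Fintype.sum_prod_type]
    apply Finset.sum_congr rfl
    intro a _
    have : margX PXY a * condOpX PXY g a ^ 2
        = condOpX PXY g a * (margX PXY a * condOpX PXY g a) := by ring
    rw [this, condOpX_key PXY hnn g, Finset.mul_sum]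
    apply Finset.sum_congr rfl
    intro b _
    ring
  have hb := bilinear_bound PXY hnn hψ hψ0 (condOpX PXY g) g hm gm
  rw [← hident] at hb
  rw [abs_of_nonneg hVh0] at hb
  by_cases hz : Vh = 0
  · rw [hz]
    positivity
  · have hVhp : 0 < Vh := lt_of_le_of_ne hVh0 (Ne.symm hz)
    have hsq : Real.sqrt Vh * Real.sqrt Vh = Vh := Real.mul_self_sqrt hVh0
    have h1 : Real.sqrt Vh ≤ ψ * Real.sqrt Vg := by
      have hshp : 0 < Real.sqrt Vh := Real.sqrt_pos.mpr hVhp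
      calc Real.sqrt Vh = Vh / Real.sqrt Vh := by rw [eq_div_iff hshp.ne', hsq]
        _ ≤ ψ * Real.sqrt Vh * Real.sqrt Vg / Real.sqrt Vh := by
            exact div_le_div_of_nonneg_right hb hshp.le
        _ = ψ * Real.sqrt Vg := by field_simp
    calc Vh = Real.sqrt Vh * Real.sqrt Vh := hsq.symm
      _ ≤ (ψ * Real.sqrt Vg) * (ψ * Real.sqrt Vg) := by
          apply mul_le_mul h1 h1 (Real.sqrt_nonneg _)
          positivity
      _ = ψ ^ 2 * (Real.sqrt Vg * Real.sqrt Vg) := by ring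
      _ = ψ ^ 2 * Vg := by rw [Real.mul_self_sqrt hVg0]

end SingleLetter

section Key

variable {𝒳 𝒴 : Type*} [Fintype 𝒳] [Fintype 𝒴] [DecidableEq 𝒳] [DecidableEq 𝒴] {n : ℕ}
variable (PXY : 𝒳 × 𝒴 → ℝ)

/-- Replace the `y`-dependence at coordinate `k` by conditioning on `x_k`. -/
def stepOp (k : Fin n) (F : (Fin n → 𝒳 × 𝒴) → ℝ) (ω : Fin n → 𝒳 × 𝒴) : ℝ :=
  if margX PXY ((ω k).1) = 0 then 0 else
    (∑ b, PXY ((ω k).1, b) * F (Function.update ω k ((ω k).1, b))) / margX PXY ((ω k).1)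

lemma stepOp_update (k : Fin n) (F : (Fin n → 𝒳 × 𝒴) → ℝ) (ω : Fin n → 𝒳 × 𝒴)
    (a : 𝒳) (b : 𝒴) :
    stepOp PXY k F (Function.update ω k (a, b))
      = if margX PXY a = 0 then 0 else
          (∑ b', PXY (a, b') * F (Function.update ω k (a, b'))) / margX PXY a := by
  unfold stepOp
  simp only [Function.update_self, Function.update_idem]

lemma stepOp_key (hnn : ∀ p, 0 ≤ PXY p) (k : Fin n) (F : (Fin n → 𝒳 × 𝒴) → ℝ)
    (ω : Fin n → 𝒳 × 𝒴) (a : 𝒳) (b : 𝒴) :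
    margX PXY a * stepOp PXY k F (Function.update ω k (a, b))
      = ∑ b', PXY (a, b') * F (Function.update ω k (a, b')) := by
  rw [stepOp_update]
  by_cases h : margX PXY a = 0
  · rw [if_pos h, mul_zero]
    symm
    apply Finset.sum_eq_zero
    intro b' _
    rw [PXY_zero_of_margX PXY hnn h b', zero_mul]
  · rw [if_neg h]
    field_simp

lemma xpart_update (ω : Fin n → 𝒳 × 𝒴) (k : Fin n) (a : 𝒳) (b : 𝒴) :
    (fun i => ((Function.update ω k (a, b)) i).1)
      = Function.update (fun i => (ω i).1) k a := by
  funext i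
  rcases eq_or_ne i k with rfl | h
  · simp
  · simp [Function.update_of_ne h]

lemma key_bound (hnn : ∀ p, 0 ≤ PXY p) (hsum : ∑ p : 𝒳 × 𝒴, PXY p = 1)
    {ψ : ℝ} (hψ : IsLUB (corrSet PXY) ψ) (hψ0 : 0 ≤ ψ)
    (u : (Fin n → 𝒳) → ℝ) (B : Finset (Fin n)) :
    ∀ F : (Fin n → 𝒳 × 𝒴) → ℝ,
      (∀ k ∈ B, ∀ (ω : Fin n → 𝒳 × 𝒴) (a a' : 𝒳) (b : 𝒴),
        F (Function.update ω k (a, b)) = F (Function.update ω k (a', b))) →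
      (∀ k ∈ B, ∀ ω : Fin n → 𝒳 × 𝒴,
        ∑ b, margY PXY b * F (Function.update ω k ((ω k).1, b)) = 0) →
      |EX PXY (fun ω => u (fun i => (ω i).1) * F ω)|
        ≤ ψ ^ B.card * Real.sqrt (EX (margX PXY) (fun x => u x ^ 2))
            * Real.sqrt (EX PXY (fun ω => F ω ^ 2)) := by
  induction B using Finset.strongInduction with
  | _ B ih =>
    intro F hxdep hcent
    have hW : ∀ ω : Fin n → 𝒳 × 𝒴, 0 ≤ ∏ i, PXY (ω i) :=
      fun ω => Finset.prod_nonneg (fun i _ => hnn _)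
    rcases Finset.eq_empty_or_nonempty B with rfl | ⟨k, hk⟩
    · simp only [Finset.card_empty, pow_zero, one_mul]
      have cs : (∑ ω : Fin n → 𝒳 × 𝒴, (∏ i, PXY (ω i)) * (u (fun i => (ω i).1) * F ω)) ^ 2
          ≤ (∑ ω : Fin n → 𝒳 × 𝒴, (∏ i, PXY (ω i)) * u (fun i => (ω i).1) ^ 2)
            * (∑ ω : Fin n → 𝒳 × 𝒴, (∏ i, PXY (ω i)) * F ω ^ 2) := by
        have h := Finset.sum_mul_sq_le_sq_mul_sq Finset.univ
          (fun ω : Fin n → 𝒳 × 𝒴 => Real.sqrt (∏ i, PXY (ω i)) * u (fun i => (ω i).1))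
          (fun ω : Fin n → 𝒳 × 𝒴 => Real.sqrt (∏ i, PXY (ω i)) * F ω)
        have e1 : ∀ ω : Fin n → 𝒳 × 𝒴,
            (Real.sqrt (∏ i, PXY (ω i)) * u (fun i => (ω i).1))
              * (Real.sqrt (∏ i, PXY (ω i)) * F ω)
            = (∏ i, PXY (ω i)) * (u (fun i => (ω i).1) * F ω) := by
          intro ω
          have hs := Real.mul_self_sqrt (hW ω)
          linear_combination (u (fun i => (ω i).1) * F ω) * hs
        have e2 : ∀ ω : Fin n → 𝒳 × 𝒴,
            (Real.sqrt (∏ i, PXY (ω i)) * u (fun i => (ω i).1)) ^ 2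
            = (∏ i, PXY (ω i)) * u (fun i => (ω i).1) ^ 2 := by
          intro ω
          rw [mul_pow, Real.sq_sqrt (hW ω)]
        have e3 : ∀ ω : Fin n → 𝒳 × 𝒴,
            (Real.sqrt (∏ i, PXY (ω i)) * F ω) ^ 2 = (∏ i, PXY (ω i)) * F ω ^ 2 := by
          intro ω
          rw [mul_pow, Real.sq_sqrt (hW ω)]
        simp_rw [e1, e2, e3] at h
        exact h
      have h1 : 0 ≤ ∑ ω : Fin n → 𝒳 × 𝒴, (∏ i, PXY (ω i)) * u (fun i => (ω i).1) ^ 2 :=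
        Finset.sum_nonneg (fun ω _ => mul_nonneg (hW ω) (sq_nonneg _))
      have habs : |EX PXY (fun ω => u (fun i => (ω i).1) * F ω)|
          ≤ Real.sqrt ((∑ ω : Fin n → 𝒳 × 𝒴, (∏ i, PXY (ω i)) * u (fun i => (ω i).1) ^ 2)
              * (∑ ω : Fin n → 𝒳 × 𝒴, (∏ i, PXY (ω i)) * F ω ^ 2)) := by
        rw [← Real.sqrt_sq_eq_abs]
        exact Real.sqrt_le_sqrt cs
      rw [Real.sqrt_mul h1] at habs
      have hEu : ∑ ω : Fin n → 𝒳 × 𝒴, (∏ i, PXY (ω i)) * u (fun i => (ω i).1) ^ 2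
          = EX (margX PXY) (fun x => u x ^ 2) := EX_liftX PXY (fun x => u x ^ 2)
      rw [hEu] at habs
      exact habs
    · have hss : B.erase k ⊂ B := Finset.erase_ssubset hk
      set F' := stepOp PXY k F with hF'
      -- the common value of F' on the k-fiber over a
      have hF'v : ∀ (ω : Fin n → 𝒳 × 𝒴) (a : 𝒳) (b : 𝒴),
          F' (Function.update ω k (a, b))
          = if margX PXY a = 0 then 0 else
              (∑ b', PXY (a, b') * F (Function.update ω k (a, b'))) / margX PXY a :=
        fun ω a b => stepOp_update PXY k F ω a b
      have hsumF' : ∀ (ω : Fin n → 𝒳 × 𝒴) (a : 𝒳),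
          ∑ b, PXY (a, b) * F' (Function.update ω k (a, b))
          = ∑ b, PXY (a, b) * F (Function.update ω k (a, b)) := by
        intro ω a
        simp_rw [hF'v ω a]
        rw [← Finset.sum_mul]
        by_cases h : margX PXY a = 0
        · rw [if_pos h, mul_zero]
          symm
          apply Finset.sum_eq_zero
          intro b _
          rw [PXY_zero_of_margX PXY hnn h b, zero_mul]
        · rw [if_neg h]
          have : ∑ b, PXY (a, b) = margX PXY a := rfl
          rw [this]
          field_simp
      -- Step 1 : replacing F by F' does not change the joint expectation
      have s1 : EX PXY (fun ω => u (fun i => (ω i).1) * F ω)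
          = EX PXY (fun ω => u (fun i => (ω i).1) * F' ω) := by
        rw [show EX PXY (fun ω => u (fun i => (ω i).1) * F ω)
            = ∑ ω : Fin n → 𝒳 × 𝒴, (∏ i, PXY (ω i)) * (u (fun i => (ω i).1) * F ω) from rfl]
        rw [show EX PXY (fun ω => u (fun i => (ω i).1) * F' ω)
            = ∑ ω : Fin n → 𝒳 × 𝒴, (∏ i, PXY (ω i)) * (u (fun i => (ω i).1) * F' ω) from rfl]
        rw [fubini_k PXY hsum k (fun ω => u (fun i => (ω i).1) * F ω),
          fubini_k PXY hsum k (fun ω => u (fun i => (ω i).1) * F' ω)]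
        apply Finset.sum_congr rfl
        intro ω _
        congr 1
        rw [Fintype.sum_prod_type, Fintype.sum_prod_type]
        apply Finset.sum_congr rfl
        intro a _
        have hU : ∀ b : 𝒴, u (fun i => ((Function.update ω k (a, b)) i).1)
            = u (Function.update (fun i => (ω i).1) k a) := by
          intro b
          rw [xpart_update]
        calc ∑ b, PXY (a, b) * (u (fun i => ((Function.update ω k (a, b)) i).1)
              * F (Function.update ω k (a, b)))
            = u (Function.update (fun i => (ω i).1) k a)
              * ∑ b, PXY (a, b) * F (Function.update ω k (a, b)) := by
              rw [Finset.mul_sum]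
              apply Finset.sum_congr rfl
              intro b _
              rw [hU b]
              ring
          _ = u (Function.update (fun i => (ω i).1) k a)
              * ∑ b, PXY (a, b) * F' (Function.update ω k (a, b)) := by
              rw [hsumF' ω a]
          _ = ∑ b, PXY (a, b) * (u (fun i => ((Function.update ω k (a, b)) i).1)
              * F' (Function.update ω k (a, b))) := by
              rw [Finset.mul_sum]
              apply Finset.sum_congr rfl
              intro b _
              rw [hU b]
              ring
      -- Step 2 : the norm contracts by ψ under F ↦ F'
      have s2 : EX PXY (fun ω => F' ω ^ 2) ≤ ψ ^ 2 * EX PXY (fun ω => F ω ^ 2) := by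
        rw [show EX PXY (fun ω => F' ω ^ 2)
            = ∑ ω : Fin n → 𝒳 × 𝒴, (∏ i, PXY (ω i)) * F' ω ^ 2 from rfl]
        rw [show EX PXY (fun ω => F ω ^ 2)
            = ∑ ω : Fin n → 𝒳 × 𝒴, (∏ i, PXY (ω i)) * F ω ^ 2 from rfl]
        rw [fubini_k PXY hsum k (fun ω => F' ω ^ 2), fubini_k PXY hsum k (fun ω => F ω ^ 2)]
        rw [Finset.mul_sum]
        apply Finset.sum_le_sum
        intro ω _
        rw [show ψ ^ 2 * ((∏ i, PXY (ω i)) * ∑ p : 𝒳 × 𝒴, PXY p * F (Function.update ω k p) ^ 2)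
            = (∏ i, PXY (ω i)) * (ψ ^ 2 * ∑ p : 𝒳 × 𝒴, PXY p * F (Function.update ω k p) ^ 2)
            from by ring]
        apply mul_le_mul_of_nonneg_left ?_ (hW ω)
        set g : 𝒴 → ℝ := fun b => F (Function.update ω k ((ω k).1, b)) with hg
        have hgm : ∑ b, margY PXY b * g b = 0 := hcent k hk ω
        have hFg : ∀ (a : 𝒳) (b : 𝒴), F (Function.update ω k (a, b)) = g b := by
          intro a b
          exact hxdep k hk ω a ((ω k).1) b
        have hF'c : ∀ (a : 𝒳) (b : 𝒴), F' (Function.update ω k (a, b)) = condOpX PXY g a := by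
          intro a b
          rw [hF'v ω a b]
          unfold condOpX
          by_cases h : margX PXY a = 0
          · rw [if_pos h, if_pos h]
          · rw [if_neg h, if_neg h]
            congr 1
            apply Finset.sum_congr rfl
            intro b' _
            rw [hFg a b']
        calc ∑ p : 𝒳 × 𝒴, PXY p * F' (Function.update ω k p) ^ 2
            = ∑ a, margX PXY a * condOpX PXY g a ^ 2 := by
              rw [Fintype.sum_prod_type]
              apply Finset.sum_congr rfl
              intro a _
              have hterm : ∀ b, PXY (a, b) * F' (Function.update ω k (a, b)) ^ 2
                  = PXY (a, b) * condOpX PXY g a ^ 2 := fun b => by rw [hF'c a b]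
              rw [Finset.sum_congr rfl (fun b _ => hterm b), ← Finset.sum_mul]
              rfl
          _ ≤ ψ ^ 2 * ∑ b, margY PXY b * g b ^ 2 := condOpX_norm PXY hnn hψ hψ0 g hgm
          _ = ψ ^ 2 * ∑ p : 𝒳 × 𝒴, PXY p * F (Function.update ω k p) ^ 2 := by
              congr 1
              calc ∑ b, margY PXY b * g b ^ 2
                  = ∑ b, ∑ a, PXY (a, b) * g b ^ 2 := by
                    apply Finset.sum_congr rfl
                    intro b _
                    rw [margY, Finset.sum_mul]
                _ = ∑ a, ∑ b, PXY (a, b) * g b ^ 2 := Finset.sum_comm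
                _ = ∑ a, ∑ b, PXY (a, b) * F (Function.update ω k (a, b)) ^ 2 := by
                    apply Finset.sum_congr rfl
                    intro a _
                    exact Finset.sum_congr rfl (fun b _ => by rw [hFg a b])
                _ = ∑ p : 𝒳 × 𝒴, PXY p * F (Function.update ω k p) ^ 2 := by
                    rw [Fintype.sum_prod_type]
      -- Step 3 : the hypotheses propagate to F' on B.erase k
      have hxdep' : ∀ k' ∈ B.erase k, ∀ (ω : Fin n → 𝒳 × 𝒴) (a a' : 𝒳) (b : 𝒴),
          F' (Function.update ω k' (a, b)) = F' (Function.update ω k' (a', b)) := by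
        intro k' hk' ω a a' b
        have hkk' : k' ≠ k := (Finset.mem_erase.mp hk').1
        have hk'B : k' ∈ B := (Finset.mem_erase.mp hk').2
        have hev : ∀ c : 𝒳, Function.update ω k' (c, b) k = ω k :=
          fun c => Function.update_of_ne (Ne.symm hkk') _ ω
        rw [hF']
        unfold stepOp
        rw [hev a, hev a']
        by_cases h : margX PXY ((ω k).1) = 0
        · rw [if_pos h, if_pos h]
        · rw [if_neg h, if_neg h]
          congr 1
          apply Finset.sum_congr rfl
          intro b' _
          rw [Function.update_comm hkk', Function.update_comm hkk']
          rw [hxdep k' hk'B _ a a' b]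
      have hcent' : ∀ k' ∈ B.erase k, ∀ ω : Fin n → 𝒳 × 𝒴,
          ∑ b, margY PXY b * F' (Function.update ω k' ((ω k').1, b)) = 0 := by
        intro k' hk' ω
        have hkk' : k' ≠ k := (Finset.mem_erase.mp hk').1
        have hk'B : k' ∈ B := (Finset.mem_erase.mp hk').2
        have hev : ∀ b : 𝒴, Function.update ω k' ((ω k').1, b) k = ω k :=
          fun b => Function.update_of_ne (Ne.symm hkk') _ ω
        have hval : ∀ b, F' (Function.update ω k' ((ω k').1, b))
            = if margX PXY ((ω k).1) = 0 then 0 else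
                (∑ b', PXY ((ω k).1, b')
                  * F (Function.update (Function.update ω k ((ω k).1, b')) k' ((ω k').1, b)))
                / margX PXY ((ω k).1) := by
          intro b
          rw [hF']
          unfold stepOp
          rw [hev b]
          by_cases h : margX PXY ((ω k).1) = 0
          · rw [if_pos h, if_pos h]
          · rw [if_neg h, if_neg h]
            congr 1
            apply Finset.sum_congr rfl
            intro b' _
            rw [Function.update_comm hkk']
        simp_rw [hval]
        by_cases h : margX PXY ((ω k).1) = 0
        · simp [h]
        · simp only [if_neg h]
          simp_rw [← mul_div_assoc]
          rw [← Finset.sum_div]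
          have hnum : ∑ b, margY PXY b * ∑ b', PXY ((ω k).1, b')
              * F (Function.update (Function.update ω k ((ω k).1, b')) k' ((ω k').1, b)) = 0 := by
            simp_rw [Finset.mul_sum]
            rw [Finset.sum_comm]
            apply Finset.sum_eq_zero
            intro b' _
            have hinner : ∀ b, margY PXY b * (PXY ((ω k).1, b')
                * F (Function.update (Function.update ω k ((ω k).1, b')) k' ((ω k').1, b)))
                = PXY ((ω k).1, b') * (margY PXY b
                  * F (Function.update (Function.update ω k ((ω k).1, b')) k' ((ω k').1, b))) :=
              fun b => by ring
            rw [Finset.sum_congr rfl (fun b _ => hinner b), ← Finset.mul_sum]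
            have hc := hcent k' hk'B (Function.update ω k ((ω k).1, b'))
            have heval : (Function.update ω k ((ω k).1, b') k').1 = (ω k').1 := by
              rw [Function.update_of_ne hkk']
            rw [heval] at hc
            rw [hc, mul_zero]
          rw [hnum, zero_div]
      -- Combine
      have IH := ih (B.erase k) hss F' hxdep' hcent'
      have hsqF' : Real.sqrt (EX PXY fun ω => F' ω ^ 2)
          ≤ ψ * Real.sqrt (EX PXY fun ω => F ω ^ 2) := by
        have h := Real.sqrt_le_sqrt s2
        rwa [Real.sqrt_mul (sq_nonneg ψ), Real.sqrt_sq hψ0] at h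
      have hcard : (B.erase k).card + 1 = B.card := Finset.card_erase_add_one hk
      calc |EX PXY (fun ω => u (fun i => (ω i).1) * F ω)|
          = |EX PXY (fun ω => u (fun i => (ω i).1) * F' ω)| := by rw [s1]
        _ ≤ ψ ^ (B.erase k).card * Real.sqrt (EX (margX PXY) fun x => u x ^ 2)
            * Real.sqrt (EX PXY fun ω => F' ω ^ 2) := IH
        _ ≤ ψ ^ (B.erase k).card * Real.sqrt (EX (margX PXY) fun x => u x ^ 2)
            * (ψ * Real.sqrt (EX PXY fun ω => F ω ^ 2)) := by
            apply mul_le_mul_of_nonneg_left hsqF'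
            positivity
        _ = ψ ^ B.card * Real.sqrt (EX (margX PXY) fun x => u x ^ 2)
            * Real.sqrt (EX PXY fun ω => F ω ^ 2) := by
            rw [← hcard, pow_succ]
            ring

end Key

section MoreAux

variable {α : Type*} [Fintype α] [DecidableEq α] {n : ℕ}

lemma EX_add (w : α → ℝ) (f g : (Fin n → α) → ℝ) :
    EX w (fun x => f x + g x) = EX w f + EX w g := by
  simp [EX, mul_add, Finset.sum_add_distrib]

lemma EX_mul_left (w : α → ℝ) (c : ℝ) (f : (Fin n → α) → ℝ) :
    EX w (fun x => c * f x) = c * EX w f := by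
  rw [EX, EX, Finset.mul_sum]
  exact Finset.sum_congr rfl (fun x _ => by ring)

lemma condExp_empty (w : α → ℝ) (g : (Fin n → α) → ℝ) (x : Fin n → α) :
    condExp w g ∅ x = EX w g := by
  simp [condExp, EX]

lemma comp_empty (w : α → ℝ) (g : (Fin n → α) → ℝ) (x : Fin n → α) :
    comp w g ∅ x = EX w g := by
  rw [comp_eq]
  simp [condExp_empty]

lemma EX_comp_zero (w : α → ℝ) (hw : ∑ a, w a = 1) (g : (Fin n → α) → ℝ)
    (hg : EX w g = 0) (S : Finset (Fin n)) : EX w (comp w g S) = 0 := by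
  rcases Finset.eq_empty_or_nonempty S with rfl | ⟨k, hk⟩
  · rw [EX_congr w _ (fun _ => (0:ℝ)) (fun x => by rw [comp_empty, hg])]
    simp [EX]
  · have h1 : EX w (comp w g S) = EX w (fun x => (fun _ : Fin n → α => (1:ℝ)) x * comp w g S x) := by
      apply EX_congr
      intro x
      ring
    rw [h1, pullout w hw (comp w g S) (fun _ => 1) ∅ (fun x x' _ => rfl)]
    rw [EX_congr w _ (fun _ => (0:ℝ))]
    · simp [EX]
    · intro x
      rw [condExp_comp w hw g S ∅ x, if_neg, mul_zero]
      intro hcon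
      rw [Finset.subset_empty] at hcon
      rw [hcon] at hk
      exact absurd hk (Finset.notMem_empty k)

lemma varX_eq_sq (w : α → ℝ) (g : (Fin n → α) → ℝ) (hg : EX w g = 0) :
    varX w g = EX w (fun x => g x ^ 2) := by
  rw [varX, hg]
  apply EX_congr
  intro x
  ring

lemma ypart_update {𝒳 𝒴 : Type*} [DecidableEq 𝒳] [DecidableEq 𝒴]
    (ω : Fin n → 𝒳 × 𝒴) (k : Fin n) (a : 𝒳) (b : 𝒴) :
    (fun i => ((Function.update ω k (a, b)) i).2)
      = Function.update (fun i => (ω i).2) k b := by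
  funext i
  rcases eq_or_ne i k with rfl | h
  · simp
  · simp [Function.update_of_ne h]

end MoreAux

set_option maxHeartbeats 1000000 in
/-- Lemma 1 of the paper. For binary-block-encoders
`e : 𝒳ⁿ → {0,1}` and `f : 𝒴ⁿ → {0,1}` applied to a pair of DMS's `(Xⁿ, Yⁿ)`
with dependency spectra `(P_S)`, `(Q_S)` and maximal correlation `ψ`,
the probability of disagreement of the outputs satisfies the two-sided bound. -/
theorem disagreement_probability_bounds
    {𝒳 𝒴 : Type*} [Fintype 𝒳] [Fintype 𝒴] [DecidableEq 𝒳] [DecidableEq 𝒴]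
    {n : ℕ} (PXY : 𝒳 × 𝒴 → ℝ)
    (hnn : ∀ p, 0 ≤ PXY p) (hsum : ∑ p : 𝒳 × 𝒴, PXY p = 1)
    (hX2 : ∃ x₁ x₂ : 𝒳, x₁ ≠ x₂ ∧ 0 < margX PXY x₁ ∧ 0 < margX PXY x₂)
    (hY2 : ∃ y₁ y₂ : 𝒴, y₁ ≠ y₂ ∧ 0 < margY PXY y₁ ∧ 0 < margY PXY y₂)
    (ψ : ℝ) (hψ : IsLUB (corrSet PXY) ψ)
    (e : (Fin n → 𝒳) → Bool) (f : (Fin n → 𝒴) → Bool)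
    (P Q : Finset (Fin n) → ℝ)
    (hP : ∀ S, P S = varX (margX PXY) (comp (margX PXY) (centered (margX PXY) e) S))
    (hQ : ∀ S, Q S = varX (margY PXY) (comp (margY PXY) (centered (margY PXY) f) S)) :
    2 * Real.sqrt (∑ S : Finset (Fin n), P S) * Real.sqrt (∑ S : Finset (Fin n), Q S)
        - 2 * ∑ S : Finset (Fin n), ψ ^ S.card * Real.sqrt (P S) * Real.sqrt (Q S)
      ≤ EJ PXY (fun x y => if e x = f y then 0 else 1)
    ∧ EJ PXY (fun x y => if e x = f y then 0 else 1)
      ≤ 1 - 2 * Real.sqrt (∑ S : Finset (Fin n), P S) *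
              Real.sqrt (∑ S : Finset (Fin n), Q S)
          + 2 * ∑ S : Finset (Fin n), ψ ^ S.card * Real.sqrt (P S) * Real.sqrt (Q S) := by
  classical
  have hwX : ∑ x, margX PXY x = 1 := margX_sum PXY hsum
  have hwY : ∑ y, margY PXY y = 1 := margY_sum PXY hsum
  have hnnX : ∀ x, 0 ≤ margX PXY x := margX_nonneg PXY hnn
  have hnnY : ∀ y, 0 ≤ margY PXY y := margY_nonneg PXY hnn
  have hψ0 : 0 ≤ ψ := psi_nonneg PXY hnn hsum hX2 hY2 hψ
  set wX := margX PXY with hwXdef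
  set wY := margY PXY with hwYdef
  set eR : (Fin n → 𝒳) → ℝ := fun x => if e x then 1 else 0 with heR
  set fR : (Fin n → 𝒴) → ℝ := fun y => if f y then 1 else 0 with hfR
  set q : ℝ := EX wX eR with hq
  set s : ℝ := EX wY fR with hs
  set et : (Fin n → 𝒳) → ℝ := centered wX e with het
  set ft : (Fin n → 𝒴) → ℝ := centered wY f with hft
  have hprodX : ∀ x : Fin n → 𝒳, 0 ≤ ∏ i, wX (x i) :=
    fun x => Finset.prod_nonneg (fun i _ => hnnX _)
  have hprodY : ∀ y : Fin n → 𝒴, 0 ≤ ∏ i, wY (y i) :=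
    fun y => Finset.prod_nonneg (fun i _ => hnnY _)
  have hprodJ : ∀ ω : Fin n → 𝒳 × 𝒴, 0 ≤ ∏ i, PXY (ω i) :=
    fun ω => Finset.prod_nonneg (fun i _ => hnn _)
  have het_eq : ∀ x, et x = eR x - q := fun x => rfl
  have hft_eq : ∀ y, ft y = fR y - s := fun y => rfl
  have hEet : EX wX et = 0 := by
    rw [EX_congr wX et (fun x => eR x - q) het_eq, EX_sub, EX_const wX hwX q, ← hq, sub_self]
  have hEft : EX wY ft = 0 := by
    rw [EX_congr wY ft (fun y => fR y - s) hft_eq, EX_sub, EX_const wY hwY s, ← hs, sub_self]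
  -- bounds on q and s
  have hq0 : 0 ≤ q := by
    rw [hq]
    apply Finset.sum_nonneg
    intro x _
    apply mul_nonneg (hprodX x)
    rw [heR]
    positivity
  have hq1 : q ≤ 1 := by
    rw [hq]
    calc ∑ x : Fin n → 𝒳, (∏ i, wX (x i)) * eR x
        ≤ ∑ x : Fin n → 𝒳, (∏ i, wX (x i)) * 1 := by
          apply Finset.sum_le_sum
          intro x _
          apply mul_le_mul_of_nonneg_left ?_ (hprodX x)
          by_cases h : e x <;> simp [heR, h]
      _ = 1 := by
          simp only [mul_one]
          exact mass wX hwX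
  have hs0 : 0 ≤ s := by
    rw [hs]
    apply Finset.sum_nonneg
    intro y _
    apply mul_nonneg (hprodY y)
    rw [hfR]
    positivity
  have hs1 : s ≤ 1 := by
    rw [hs]
    calc ∑ y : Fin n → 𝒴, (∏ i, wY (y i)) * fR y
        ≤ ∑ y : Fin n → 𝒴, (∏ i, wY (y i)) * 1 := by
          apply Finset.sum_le_sum
          intro y _
          apply mul_le_mul_of_nonneg_left ?_ (hprodY y)
          by_cases h : f y <;> simp [hfR, h]
      _ = 1 := by
          simp only [mul_one]
          exact mass wY hwY
  -- P, Q as second moments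
  have hPS : ∀ S, P S = EX wX (fun x => comp wX et S x ^ 2) := by
    intro S
    rw [hP S, varX_eq_sq wX _ (EX_comp_zero wX hwX et hEet S)]
  have hQS : ∀ S, Q S = EX wY (fun y => comp wY ft S y ^ 2) := by
    intro S
    rw [hQ S, varX_eq_sq wY _ (EX_comp_zero wY hwY ft hEft S)]
  have hPS0 : ∀ S, 0 ≤ P S := by
    intro S
    rw [hPS S]
    exact Finset.sum_nonneg (fun x _ => mul_nonneg (hprodX x) (sq_nonneg _))
  have hQS0 : ∀ S, 0 ≤ Q S := by
    intro S
    rw [hQS S]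
    exact Finset.sum_nonneg (fun y _ => mul_nonneg (hprodY y) (sq_nonneg _))
  -- second moment of the centered encoder output
  have hVq : EX wX (fun x => et x ^ 2) = q - q ^ 2 := by
    have hpt : ∀ x, et x ^ 2 = eR x - 2 * q * eR x + q ^ 2 := by
      intro x
      rw [het_eq x, heR]
      by_cases h : e x <;> simp [h] <;> ring
    rw [EX_congr wX _ _ hpt, EX_add, EX_sub, EX_mul_left, EX_const wX hwX (q ^ 2), ← hq]
    ring
  have hVs : EX wY (fun y => ft y ^ 2) = s - s ^ 2 := by
    have hpt : ∀ y, ft y ^ 2 = fR y - 2 * s * fR y + s ^ 2 := by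
      intro y
      rw [hft_eq y, hfR]
      by_cases h : f y <;> simp [h] <;> ring
    rw [EX_congr wY _ _ hpt, EX_add, EX_sub, EX_mul_left, EX_const wY hwY (s ^ 2), ← hs]
    ring
  -- variance decomposition : ∑ P S = q - q²
  have hsumP : ∑ S : Finset (Fin n), P S = q - q ^ 2 := by
    have h1 : EX wX (fun x => et x ^ 2)
        = ∑ S : Finset (Fin n), EX wX (fun x => ∑ T : Finset (Fin n),
            comp wX et S x * comp wX et T x) := by
      rw [← EX_finset_sum]
      apply EX_congr
      intro x
      rw [← Finset.sum_mul_sum]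
      rw [decomp wX et x]
      ring
    have h2 : ∀ S : Finset (Fin n), EX wX (fun x => ∑ T : Finset (Fin n),
        comp wX et S x * comp wX et T x) = EX wX (fun x => comp wX et S x ^ 2) := by
      intro S
      rw [EX_finset_sum]
      rw [Finset.sum_eq_single_of_mem S (Finset.mem_univ S)]
      · apply EX_congr
        intro x
        ring
      · intro T _ hTS
        exact EX_comp_mul_comp wX hwX et et S T (Ne.symm hTS)
    calc ∑ S : Finset (Fin n), P S
        = ∑ S : Finset (Fin n), EX wX (fun x => comp wX et S x ^ 2) :=
          Finset.sum_congr rfl (fun S _ => hPS S)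
      _ = EX wX (fun x => et x ^ 2) := by
          rw [h1]
          exact Finset.sum_congr rfl (fun S _ => (h2 S).symm)
      _ = q - q ^ 2 := hVq
  have hsumQ : ∑ S : Finset (Fin n), Q S = s - s ^ 2 := by
    have h1 : EX wY (fun y => ft y ^ 2)
        = ∑ S : Finset (Fin n), EX wY (fun y => ∑ T : Finset (Fin n),
            comp wY ft S y * comp wY ft T y) := by
      rw [← EX_finset_sum]
      apply EX_congr
      intro y
      rw [← Finset.sum_mul_sum]
      rw [decomp wY ft y]
      ring
    have h2 : ∀ S : Finset (Fin n), EX wY (fun y => ∑ T : Finset (Fin n),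
        comp wY ft S y * comp wY ft T y) = EX wY (fun y => comp wY ft S y ^ 2) := by
      intro S
      rw [EX_finset_sum]
      rw [Finset.sum_eq_single_of_mem S (Finset.mem_univ S)]
      · apply EX_congr
        intro y
        ring
      · intro T _ hTS
        exact EX_comp_mul_comp wY hwY ft ft S T (Ne.symm hTS)
    calc ∑ S : Finset (Fin n), Q S
        = ∑ S : Finset (Fin n), EX wY (fun y => comp wY ft S y ^ 2) :=
          Finset.sum_congr rfl (fun S _ => hQS S)
      _ = EX wY (fun y => ft y ^ 2) := by
          rw [h1]
          exact Finset.sum_congr rfl (fun S _ => (h2 S).symm)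
      _ = s - s ^ 2 := hVs
  -- the joint correlation term and its decomposition
  set R : ℝ := EX PXY (fun ω => et (fun i => (ω i).1) * ft (fun i => (ω i).2)) with hR
  set D : Finset (Fin n) → ℝ := fun S => EX PXY (fun ω =>
    comp wX et S (fun i => (ω i).1) * comp wY ft S (fun i => (ω i).2)) with hD
  have hRdec : R = ∑ S : Finset (Fin n), D S := by
    rw [hR]
    have hpt : ∀ ω : Fin n → 𝒳 × 𝒴,
        et (fun i => (ω i).1) * ft (fun i => (ω i).2)
        = ∑ S : Finset (Fin n), ∑ T : Finset (Fin n),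
            comp wX et S (fun i => (ω i).1) * comp wY ft T (fun i => (ω i).2) := by
      intro ω
      rw [← Finset.sum_mul_sum]
      rw [decomp wX et, decomp wY ft]
    rw [EX_congr PXY _ _ hpt, EX_finset_sum]
    apply Finset.sum_congr rfl
    intro S _
    rw [EX_finset_sum]
    rw [Finset.sum_eq_single_of_mem S (Finset.mem_univ S)
      (fun T _ hTS => cross_term_zero PXY hsum hwX hwY et ft S T (Ne.symm hTS))]
  -- the diagonal bound
  have hdiag : ∀ S : Finset (Fin n),
      |D S| ≤ ψ ^ S.card * Real.sqrt (P S) * Real.sqrt (Q S) := by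
    intro S
    have hxd : ∀ k ∈ S, ∀ (ω : Fin n → 𝒳 × 𝒴) (a a' : 𝒳) (b : 𝒴),
        comp wY ft S (fun i => ((Function.update ω k (a, b)) i).2)
        = comp wY ft S (fun i => ((Function.update ω k (a', b)) i).2) := by
      intro k _ ω a a' b
      rw [ypart_update, ypart_update]
    have hcc : ∀ k ∈ S, ∀ ω : Fin n → 𝒳 × 𝒴,
        ∑ b, wY b * comp wY ft S (fun i => ((Function.update ω k ((ω k).1, b)) i).2) = 0 := by
      intro k hk ω
      have hrw : ∀ b : 𝒴, comp wY ft S (fun i => ((Function.update ω k ((ω k).1, b)) i).2)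
          = comp wY ft S (Function.update (fun i => (ω i).2) k b) := by
        intro b
        rw [ypart_update]
      simp_rw [hrw]
      rw [← condExp_erase wY (comp wY ft S) k (fun i => (ω i).2)]
      rw [condExp_comp wY hwY ft S (Finset.univ.erase k) _]
      rw [if_neg]
      intro hcon
      have := hcon hk
      rw [Finset.mem_erase] at this
      exact this.1 rfl
    have happ := key_bound PXY hnn hsum hψ hψ0 (comp wX et S) S
      (fun ω => comp wY ft S (fun i => (ω i).2)) hxd hcc
    have hDabs : |D S| = |EX PXY (fun ω => comp wX et S (fun i => (ω i).1)
        * comp wY ft S (fun i => (ω i).2))| := rfl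
    rw [hDabs]
    have hEq1 : EX (margX PXY) (fun x => comp wX et S x ^ 2) = P S := (hPS S).symm
    have hEq2 : EX PXY (fun ω => comp wY ft S (fun i => (ω i).2) ^ 2) = Q S := by
      rw [EX_liftY PXY (fun y => comp wY ft S y ^ 2)]
      exact (hQS S).symm
    rw [hEq1, hEq2] at happ
    exact happ
  have hRabs : |R| ≤ ∑ S : Finset (Fin n), ψ ^ S.card * Real.sqrt (P S) * Real.sqrt (Q S) := by
    rw [hRdec]
    calc |∑ S : Finset (Fin n), D S| ≤ ∑ S : Finset (Fin n), |D S| :=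
          Finset.abs_sum_le_sum_abs _ _
      _ ≤ ∑ S : Finset (Fin n), ψ ^ S.card * Real.sqrt (P S) * Real.sqrt (Q S) :=
          Finset.sum_le_sum (fun S _ => hdiag S)
  -- the disagreement probability in terms of q, s and R
  have hdis : EJ PXY (fun x y => if e x = f y then 0 else 1) = q + s - 2 * q * s - 2 * R := by
    have hpt : ∀ (x : Fin n → 𝒳) (y : Fin n → 𝒴),
        (if e x = f y then (0:ℝ) else 1)
        = eR x + fR y - 2 * (et x * ft y) - 2 * s * eR x - 2 * q * fR y + 2 * (q * s) := by
      intro x y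
      rw [het_eq x, hft_eq y, heR, hfR]
      by_cases he : e x <;> by_cases hf : f y <;> simp [he, hf] <;> ring
    have hEJ : EJ PXY (fun x y => if e x = f y then 0 else 1)
        = EX PXY (fun ω => (eR (fun i => (ω i).1) + fR (fun i => (ω i).2)
            - 2 * (et (fun i => (ω i).1) * ft (fun i => (ω i).2))
            - 2 * s * eR (fun i => (ω i).1) - 2 * q * fR (fun i => (ω i).2)
            + 2 * (q * s))) := by
      apply EX_congr
      intro ω
      exact hpt _ _
    rw [hEJ, EX_add, EX_sub, EX_sub, EX_sub, EX_add]
    rw [EX_mul_left PXY 2 (fun ω => et (fun i => (ω i).1) * ft (fun i => (ω i).2))]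
    rw [EX_mul_left PXY (2 * s) (fun ω => eR (fun i => (ω i).1))]
    rw [EX_mul_left PXY (2 * q) (fun ω => fR (fun i => (ω i).2))]
    rw [EX_const PXY hsum (2 * (q * s))]
    rw [EX_liftX PXY eR, EX_liftY PXY fR, ← hq, ← hs, ← hR]
    ring
  -- final combination
  set aa : ℝ := Real.sqrt (∑ S : Finset (Fin n), P S) with haa
  set bb : ℝ := Real.sqrt (∑ S : Finset (Fin n), Q S) with hbb
  set C : ℝ := ∑ S : Finset (Fin n), ψ ^ S.card * Real.sqrt (P S) * Real.sqrt (Q S) with hC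
  have ha0 : 0 ≤ aa := Real.sqrt_nonneg _
  have hb0 : 0 ≤ bb := Real.sqrt_nonneg _
  have ha2 : aa ^ 2 = q - q ^ 2 := by
    rw [haa, Real.sq_sqrt]
    · exact hsumP
    · exact Finset.sum_nonneg (fun S _ => hPS0 S)
  have hb2 : bb ^ 2 = s - s ^ 2 := by
    rw [hbb, Real.sq_sqrt]
    · exact hsumQ
    · exact Finset.sum_nonneg (fun S _ => hQS0 S)
  have hRle := abs_le.mp hRabs
  have key1 : 2 * aa * bb ≤ q + s - 2 * q * s := by
    nlinarith [sq_nonneg (aa - bb), sq_nonneg (q - s), ha2, hb2]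
  have key2 : q + s - 2 * q * s ≤ 1 - 2 * aa * bb := by
    nlinarith [sq_nonneg (aa - bb), sq_nonneg (1 - q - s), ha2, hb2]
  constructor
  · rw [hdis]
    have := hRle.2
    linarith
  · rw [hdis]
    have := hRle.1
    linarith

end BBE
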